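/- arXiv:1705.04956 — 9 statements merged into one kernel-verified Lean document; each statement's English description precedes it below -/
import Mathlib

section
/- The map sending a subset X of the Brandt semigroup B(n) to X \ {0} is a surjective monoid morphism from the power monoid P(B(n)) (under setwise product) onto the monoid of binary relations on {1,...,n} (under relational composition), and this map is exactly 2-to-1, identifying X with X ∪ {0}. -/
/-- The aperiodic Brandt semigroup `B(n)`, with `none` as the zero element. -/
abbrev B (n : ℕ) := Option (Fin n × Fin n)

/-- Multiplication in `B(n)`. -/
def bmul {n : ℕ} : B n → B n → B n
  | some (i, j), some (k, l) => if j = k then some (i, l) else none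
  | _, _ => none

/-- Setwise product in the power monoid `P(B(n))`. -/
def setMul {n : ℕ} (X Y : Set (B n)) : Set (B n) :=
  {z | ∃ x ∈ X, ∃ y ∈ Y, z = bmul x y}

/-- Relational composition on binary relations on `{1,…,n}`. -/
def relComp {n : ℕ} (R S : Set (Fin n × Fin n)) : Set (Fin n × Fin n) :=
  {p | ∃ j : Fin n, (p.1, j) ∈ R ∧ (j, p.2) ∈ S}

/-- The map `X ↦ X \ {0}`, viewing nonzero elements of `B(n)` as pairs. -/
def toRel (n : ℕ) (X : Set (B n)) : Set (Fin n × Fin n) := {p | some p ∈ X}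

/-- `X ↦ X \ {0}` is a surjective monoid morphism from the power monoid `P(B(n))`
(setwise product, identity `{(i,i) : i}`) onto the monoid of binary relations on
`{1,…,n}` (relational composition, identity the diagonal), and it is exactly
2-to-1: the fiber over a relation `R` is `{R, R ∪ {0}}`. -/
theorem stmt0 (n : ℕ) :
    (∀ X Y : Set (B n), toRel n (setMul X Y) = relComp (toRel n X) (toRel n Y)) ∧
    toRel n {x | ∃ i : Fin n, x = some (i, i)} = {p | p.1 = p.2} ∧
    Function.Surjective (toRel n) ∧
    (∀ R : Set (Fin n × Fin n),
      {X : Set (B n) | toRel n X = R} =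
        {Option.some '' R, Option.some '' R ∪ {none}}) := by
  refine ⟨?_, ?_, ?_, ?_⟩
  · intro X Y
    ext p
    constructor
    · rintro ⟨x, hx, y, hy, h⟩
      match x, y with
      | some (i, j), some (k, l) =>
        simp only [bmul] at h
        split_ifs at h with hjk
        · subst hjk
          injection h with h
          subst h
          exact ⟨j, hx, hy⟩
      | some _, none => simp [bmul] at h
      | none, _ => simp [bmul] at h
    · rintro ⟨j, h1, h2⟩
      exact ⟨some (p.1, j), h1, some (j, p.2), h2, by simp [bmul]⟩
  · ext p
    constructor
    · rintro ⟨i, hi⟩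
      injection hi with h
      show p.1 = p.2
      rw [h]
    · intro h
      exact ⟨p.1, by cases p with | mk a b => cases h; rfl⟩
  · intro R
    exact ⟨Option.some '' R, by ext p; simp [toRel]⟩
  · intro R
    ext X
    simp only [Set.mem_setOf_eq, Set.mem_insert_iff, Set.mem_singleton_iff]
    constructor
    · rintro rfl
      by_cases hn : none ∈ X
      · right
        ext x
        cases x with
        | none => simp [hn]
        | some p => simp [toRel]
      · left
        ext x
        cases x with
        | none => simp [hn]
        | some p => simp [toRel]
    · rintro (rfl | rfl) <;> (ext p; simp [toRel])
end

section
/- Let T be a subsemigroup of B(n) containing 0. Then T is a nilpotent semigroup (T^k = {0} for some k ≥ 1) if and only if the corresponding binary relation {(i,j) : (i,j) ∈ T} is a strict partial order (irreflexive and transitive) on {1,...,n}; equivalently, the directed graph with edge set {(i,j) : (i,j) ∈ T} is acyclic. -/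
/-- A subset of `B(n)` is a subsemigroup if it is closed under multiplication. -/
def IsSub {n : ℕ} (T : Set (B n)) : Prop :=
  ∀ x ∈ T, ∀ y ∈ T, bmul x y ∈ T

/-- The subsemigroup of `B(n)` generated by a subset. -/
def gen {n : ℕ} (X : Set (B n)) : Set (B n) :=
  ⋂₀ {T | IsSub T ∧ X ⊆ T}

/-- `X` is a face of the subsemigroup complex `H(B(n))`: it admits an enumeration
producing a strictly increasing chain of generated subsemigroups. -/
def IsFace {n : ℕ} (X : Set (B n)) : Prop :=
  ∃ l : List (B n), l.Nodup ∧ {x | x ∈ l} = X ∧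
    ∀ (i : ℕ) (h : i < l.length), l.get ⟨i, h⟩ ∉ gen {x | x ∈ l.take i}

/-- A facet is a maximal face. -/
def IsFacet {n : ℕ} (X : Set (B n)) : Prop :=
  IsFace X ∧ ∀ Y : Set (B n), IsFace Y → X ⊆ Y → X = Y

/-- Product `x * y₁ * ⋯ * y_k` in `B(n)`. -/
def bprod {n : ℕ} : B n → List (B n) → B n
  | x, [] => x
  | x, y :: l => bprod (bmul x y) l

/-- Closure under the inverse operation `(i,j) ↦ (j,i)`. -/
def InvClosed {n : ℕ} (T : Set (B n)) : Prop :=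
  ∀ i j : Fin n, some (i, j) ∈ T → some (j, i) ∈ T

/-- A nilpotent subsemigroup of `B(n)` containing `0`: some power is `{0}`. -/
def IsNilpSub {n : ℕ} (T : Set (B n)) : Prop :=
  IsSub T ∧ none ∈ T ∧ ∃ k : ℕ, 1 ≤ k ∧
    ∀ (x : B n) (l : List (B n)), x ∈ T → (∀ y ∈ l, y ∈ T) →
      l.length + 1 = k → bprod x l = none


/-!
A nonzero product `(a, c) · y₁ ⋯ yₖ` in `B(n)` is a walk `c → ⋯` of length `k` in the graph
of `T`. If that relation is a strict order, the number of predecessors strictly increases along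
every edge and is less than `n`, so every product of `n + 1` elements of `T` vanishes.
Conversely an idempotent `(i, i) ∈ T` has all its powers nonzero. Acyclicity is irreflexivity
because the relation of a subsemigroup is already transitive.
-/

section PredCount

variable {α : Type*} (r : α → α → Prop)

noncomputable def predCount (u : α) : ℕ := {v | r v u}.ncard

variable [Finite α] {r}

lemma predCount_lt_card (hirr : ∀ u, ¬ r u u) (u : α) : predCount r u < Nat.card α := by
  rw [← Set.ncard_univ]
  refine Set.ncard_lt_ncard (Set.ssubset_univ_iff.mpr fun h => hirr u ?_)
  exact show u ∈ {v | r v u} from h ▸ Set.mem_univ u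

lemma predCount_lt_predCount (hirr : ∀ u, ¬ r u u) (htrans : ∀ ⦃u v w⦄, r u v → r v w → r u w)
    {u v : α} (huv : r u v) : predCount r u < predCount r v :=
  Set.ncard_lt_ncard ⟨fun _ hwu => htrans hwu huv, fun h => hirr u (h huv)⟩

end PredCount

section Brandt

variable {n : ℕ}

lemma IsSub.trans {T : Set (B n)} (hT : IsSub T) {i j k : Fin n}
    (hij : some (i, j) ∈ T) (hjk : some (j, k) ∈ T) : some (i, k) ∈ T := by
  simpa [bmul] using hT _ hij _ hjk

@[simp]
lemma bprod_none (l : List (B n)) : bprod none l = none := by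
  induction l with
  | nil => rfl
  | cons y l ih => exact ih

lemma bprod_replicate_idem (i : Fin n) (m : ℕ) :
    bprod (some (i, i)) (List.replicate m (some (i, i))) = some (i, i) := by
  induction m with
  | zero => rfl
  | succ m ih => simpa [List.replicate, bprod, bmul] using ih

lemma add_length_le_of_bprod_eq_some {T : Set (B n)} {f : Fin n → ℕ}
    (hf : ∀ u v, some (u, v) ∈ T → f u < f v) :
    ∀ {l : List (B n)} {a c a' b : Fin n}, (∀ y ∈ l, y ∈ T) →
      bprod (some (a, c)) l = some (a', b) → f c + l.length ≤ f b
  | [], _, _, _, _, _, h => by cases h; simp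
  | none :: l, _, _, _, _, _, h => by simp [bprod, bmul] at h
  | some (d, e) :: l, a, c, a', b, hl, h => by
    by_cases hcd : c = d
    · subst hcd
      have hce := hf c e (hl _ List.mem_cons_self)
      have hrest := add_length_le_of_bprod_eq_some hf (fun y hy => hl y (List.mem_cons_of_mem _ hy))
        (by simpa [bprod, bmul] using h)
      simp only [List.length_cons]
      omega
    · simp [bprod, bmul, hcd] at h

lemma not_idem_mem_of_bprod_eq_none {T : Set (B n)} {k : ℕ} (hk : 1 ≤ k)
    (hnil : ∀ (x : B n) (l : List (B n)), x ∈ T → (∀ y ∈ l, y ∈ T) →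
      l.length + 1 = k → bprod x l = none) (i : Fin n) : some (i, i) ∉ T := by
  intro hi
  have h := hnil _ (List.replicate (k - 1) (some (i, i))) hi
    (fun y hy => List.eq_of_mem_replicate hy ▸ hi) (by simp; omega)
  simp [bprod_replicate_idem] at h

lemma bprod_eq_none_of_not_idem_mem {T : Set (B n)} (hT : IsSub T)
    (hirr : ∀ i : Fin n, some (i, i) ∉ T) (x : B n) (l : List (B n))
    (hl : ∀ y ∈ l, y ∈ T) (hlen : l.length + 1 = n + 1) : bprod x l = none := by
  let r : Fin n → Fin n → Prop := fun u v => some (u, v) ∈ T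
  obtain _ | ⟨a, c⟩ := x
  · exact bprod_none l
  rcases hprod : bprod (some (a, c)) l with _ | ⟨a', b⟩
  · rfl
  have hgain := add_length_le_of_bprod_eq_some
    (fun u v => predCount_lt_predCount (r := r) hirr fun _ _ _ => hT.trans) hl hprod
  have hbound := predCount_lt_card (r := r) hirr b
  simp only [Nat.card_eq_fintype_card, Fintype.card_fin] at hbound
  omega

theorem exists_bprod_eq_none_iff {T : Set (B n)} (hT : IsSub T) :
    (∃ k : ℕ, 1 ≤ k ∧
        ∀ (x : B n) (l : List (B n)), x ∈ T → (∀ y ∈ l, y ∈ T) →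
          l.length + 1 = k → bprod x l = none) ↔
      ∀ i : Fin n, some (i, i) ∉ T :=
  ⟨fun ⟨_, hk, hnil⟩ => not_idem_mem_of_bprod_eq_none hk hnil,
    fun hirr => ⟨n + 1, by omega, fun x l _ => bprod_eq_none_of_not_idem_mem hT hirr x l⟩⟩

end Brandt

theorem stmt4_general (n : ℕ) (T : Set (B n)) (hT : IsSub T) :
    ((∃ k : ℕ, 1 ≤ k ∧
        ∀ (x : B n) (l : List (B n)), x ∈ T → (∀ y ∈ l, y ∈ T) →
          l.length + 1 = k → bprod x l = none) ↔
      ((∀ i : Fin n, some (i, i) ∉ T) ∧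
        (∀ i j k : Fin n, some (i, j) ∈ T → some (j, k) ∈ T → some (i, k) ∈ T))) ∧
    ((∃ k : ℕ, 1 ≤ k ∧
        ∀ (x : B n) (l : List (B n)), x ∈ T → (∀ y ∈ l, y ∈ T) →
          l.length + 1 = k → bprod x l = none) ↔
      ∀ i : Fin n, ¬ Relation.TransGen (fun a b => some (a, b) ∈ T) i i) := by
  have htrans : ∀ i j k : Fin n, some (i, j) ∈ T → some (j, k) ∈ T → some (i, k) ∈ T :=
    fun _ _ _ => hT.trans
  have : IsTrans (Fin n) (fun a b => some (a, b) ∈ T) := ⟨htrans⟩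
  rw [exists_bprod_eq_none_iff hT, Relation.transGen_eq_self]
  exact ⟨⟨fun hirr => ⟨hirr, htrans⟩, And.left⟩, Iff.rfl⟩

/-- A subsemigroup `T` of `B(n)` containing `0` is nilpotent (`T^k = {0}` for some
`k ≥ 1`) iff the corresponding relation is a strict partial order (irreflexive and
transitive); equivalently, iff the associated directed graph is acyclic. -/
theorem stmt4 (n : ℕ) (T : Set (B n)) (h0 : none ∈ T) (hT : IsSub T) :
    ((∃ k : ℕ, 1 ≤ k ∧
        ∀ (x : B n) (l : List (B n)), x ∈ T → (∀ y ∈ l, y ∈ T) →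
          l.length + 1 = k → bprod x l = none) ↔
      ((∀ i : Fin n, some (i, i) ∉ T) ∧
        (∀ i j k : Fin n, some (i, j) ∈ T → some (j, k) ∈ T → some (i, k) ∈ T))) ∧
    ((∃ k : ℕ, 1 ≤ k ∧
        ∀ (x : B n) (l : List (B n)), x ∈ T → (∀ y ∈ l, y ∈ T) →
          l.length + 1 = k → bprod x l = none) ↔
      ∀ i : Fin n, ¬ Relation.TransGen (fun a b => some (a, b) ∈ T) i i) :=
  stmt4_general n T hT
end

section
/- If N is a nilpotent subsemigroup of B(n) containing 0 whose associated acyclic directed graph has longest directed path of length k, then N has nilpotency index k+1: every product of k+1 elements of N is 0, and some product of k elements is nonzero. -/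
/-!
A product `(a, b) y₁ ⋯ y_m` in `B(n)` is nonzero exactly when `y₁ = (b, v₁), y₂ = (v₁, v₂), …,
y_m = (v_{m-1}, v_m)`, i.e. when its factors spell out a directed path `b → v₁ → ⋯ → v_m`.
So a nonzero product of `k + 1` elements of `N` gives a path `a → b → v₁ → ⋯ → v_k` of length
`k + 1`, and conversely the edges of a path of length `k` multiply to a nonzero product.
-/

section Brandt

variable {n : ℕ}

@[simp]
lemma bprod_cons_none (x : B n) (l : List (B n)) : bprod x (none :: l) = none := by
  cases x <;> simp [bprod, bmul]

lemma bprod_some_cons_some (a b c d : Fin n) (l : List (B n)) :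
    bprod (some (a, b)) (some (c, d) :: l) = if b = c then bprod (some (a, d)) l else none := by
  by_cases hbc : b = c <;> simp [bprod, bmul, hbc]

variable {N : Set (B n)}

lemma exists_isChain_of_bprod_ne_none {a b : Fin n} {l : List (B n)} (hl : ∀ y ∈ l, y ∈ N)
    (hne : bprod (some (a, b)) l ≠ none) :
    ∃ vs : List (Fin n), (b :: vs).IsChain (fun p q => some (p, q) ∈ N) ∧
      vs.length = l.length := by
  induction l generalizing b with
  | nil => exact ⟨[], .singleton b, rfl⟩
  | cons y l ih =>
    obtain _ | ⟨c, d⟩ := y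
    · exact absurd (bprod_cons_none _ l) hne
    rw [bprod_some_cons_some] at hne
    split_ifs at hne with hbc
    · subst hbc
      obtain ⟨vs, hchain, hlen⟩ := ih (fun y hy => hl y (.tail _ hy)) hne
      exact ⟨d :: vs, .cons_cons (hl _ (.head l)) hchain, by simp [hlen]⟩
    · exact absurd rfl hne

lemma exists_bprod_ne_none_of_isChain (a : Fin n) {b : Fin n} {vs : List (Fin n)}
    (hchain : (b :: vs).IsChain (fun p q => some (p, q) ∈ N)) :
    ∃ l : List (B n), (∀ y ∈ l, y ∈ N) ∧ l.length = vs.length ∧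
      bprod (some (a, b)) l ≠ none := by
  induction vs generalizing b with
  | nil => exact ⟨[], by simp, rfl, by simp [bprod]⟩
  | cons c vs ih =>
    obtain ⟨hbc, hchain⟩ := List.isChain_cons_cons.1 hchain
    obtain ⟨l, hl, hlen, hne⟩ := ih hchain
    refine ⟨some (b, c) :: l, List.forall_mem_cons.2 ⟨hbc, hl⟩, by simp [hlen], ?_⟩
    simpa [bprod_some_cons_some] using hne

end Brandt

theorem stmt5_general (n k : ℕ) (N : Set (B n))
    (hpath : ∃ (i : Fin n) (l : List (Fin n)),
      List.Chain (fun a b => some (a, b) ∈ N) i l ∧ l.length = k)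
    (hmax : ¬ ∃ (i : Fin n) (l : List (Fin n)),
      List.Chain (fun a b => some (a, b) ∈ N) i l ∧ l.length = k + 1) :
    (∀ (x : B n) (l : List (B n)), x ∈ N → (∀ y ∈ l, y ∈ N) →
      l.length + 1 = k + 1 → bprod x l = none) ∧
    (1 ≤ k → ∃ (x : B n) (l : List (B n)), x ∈ N ∧ (∀ y ∈ l, y ∈ N) ∧
      l.length + 1 = k ∧ bprod x l ≠ none) := by
  constructor
  · rintro (_ | ⟨a, b⟩) l hx hl hlen
    · exact bprod_none l
    by_contra hne
    obtain ⟨vs, hchain, hvs⟩ := exists_isChain_of_bprod_ne_none hl hne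
    exact hmax ⟨a, b :: vs, .cons_cons hx hchain, by simpa [hvs] using hlen⟩
  · intro hk
    obtain ⟨i, _ | ⟨v, vs⟩, hchain, rfl⟩ := hpath
    · exact absurd hk (by simp)
    obtain ⟨hiv, hchain⟩ := List.isChain_cons_cons.1 hchain
    obtain ⟨l, hl, hlen, hne⟩ := exists_bprod_ne_none_of_isChain i hchain
    exact ⟨some (i, v), l, hiv, hl, by simp [hlen], hne⟩

/-- If `N` is a nilpotent subsemigroup of `B(n)` containing `0` whose associated
acyclic digraph has longest directed path of length `k`, then `N` has nilpotency
index `k+1`: every product of `k+1` elements of `N` is `0`, and some product of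
`k` elements is nonzero. -/
theorem stmt5 (n k : ℕ) (N : Set (B n)) (h0 : none ∈ N) (hN : IsSub N)
    (hnil : ∃ m : ℕ, 1 ≤ m ∧
      ∀ (x : B n) (l : List (B n)), x ∈ N → (∀ y ∈ l, y ∈ N) →
        l.length + 1 = m → bprod x l = none)
    (hpath : ∃ (i : Fin n) (l : List (Fin n)),
      List.Chain (fun a b => some (a, b) ∈ N) i l ∧ l.length = k)
    (hmax : ¬ ∃ (i : Fin n) (l : List (Fin n)),
      List.Chain (fun a b => some (a, b) ∈ N) i l ∧ l.length = k + 1) :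
    (∀ (x : B n) (l : List (B n)), x ∈ N → (∀ y ∈ l, y ∈ N) →
      l.length + 1 = k + 1 → bprod x l = none) ∧
    (1 ≤ k → ∃ (x : B n) (l : List (B n)), x ∈ N ∧ (∀ y ∈ l, y ∈ N) ∧
      l.length + 1 = k ∧ bprod x l ≠ none) :=
  stmt5_general n k N hpath hmax
end

section
/- The maximal nilpotent subsemigroups of B(n) are exactly the subsemigroups of the form {(i,j) : i < j in L} ∪ {0} for a strict linear order L on {1,...,n}; in particular there are exactly n! maximal nilpotent subsemigroups of B(n). -/
/-!
A subsemigroup `T ∋ 0` of `B(n)` is nilpotent iff it contains no idempotent `(i, i)`. Then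
`i ≺ j :↔ (i, j) ∈ T` is a strict partial order, and a nonzero product of elements of `T` walks
along a `≺`-chain, so it has fewer than `n` factors. Thus nilpotent subsemigroups are the
`{(i, j) : i ≺ j} ∪ {0}` for strict orders `≺`, inclusion is extension of orders, and by
Szpilrajn's theorem the maximal ones come from the strict total orders. Ranking the elements
identifies these with the permutations of `{1, …, n}`, hence there are `n!` of them.
-/

section RelationOrder

variable {α : Type*}

theorem exists_isStrictTotalOrder_extension (r : α → α → Prop) [IsStrictOrder α r] :
    ∃ s : α → α → Prop, IsStrictTotalOrder α s ∧ ∀ a b, r a b → s a b := by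
  let := partialOrderOfSO r
  refine ⟨(· < · : LinearExtension α → LinearExtension α → Prop),
    (inferInstance : IsStrictTotalOrder (LinearExtension α) (· < ·)), fun a b h => ?_⟩
  exact (toLinearExtension.monotone (le_of_lt (α := α) h)).lt_of_ne (ne_of_lt (α := α) h)

theorem rel_of_le_of_isStrictTotalOrder {r s : α → α → Prop} [IsStrictTotalOrder α r]
    [IsStrictOrder α s] (hrs : ∀ a b, r a b → s a b) {a b : α} (h : s a b) : r a b := by
  rcases trichotomous_of r a b with hab | rfl | hba
  · exact hab
  · exact (irrefl_of s a h).elim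
  · exact (asymm_of s h (hrs b a hba)).elim

variable [Finite α] (r : α → α → Prop)

noncomputable def rankBy (a : α) : ℕ := {b | r b a}.ncard

variable {r}

theorem rankBy_lt_rankBy [IsStrictOrder α r] {a b : α} (h : r a b) : rankBy r a < rankBy r b :=
  Set.ncard_lt_ncard ⟨fun _ hc => _root_.trans hc h, fun h' => irrefl_of r a (h' h)⟩
    (Set.toFinite _)

theorem rankBy_lt_card [Std.Irrefl r] (a : α) : rankBy r a < Nat.card α := by
  rw [← Set.ncard_univ]
  exact Set.ncard_lt_ncard ⟨Set.subset_univ _, fun h => irrefl_of r a (h (Set.mem_univ a))⟩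

theorem rankBy_lt_rankBy_iff [IsStrictTotalOrder α r] {a b : α} :
    rankBy r a < rankBy r b ↔ r a b := by
  refine ⟨fun h => ?_, rankBy_lt_rankBy⟩
  rcases trichotomous_of r a b with hab | rfl | hba
  · exact hab
  · exact (lt_irrefl _ h).elim
  · exact ((rankBy_lt_rankBy hba).asymm h).elim

theorem rankBy_injective [IsStrictTotalOrder α r] : Function.Injective (rankBy r) := by
  intro a b h
  rcases trichotomous_of r a b with hab | rfl | hba
  · exact ((rankBy_lt_rankBy hab).ne h).elim
  · rfl
  · exact ((rankBy_lt_rankBy hba).ne h.symm).elim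

end RelationOrder

section StrictTotalOrderFin

variable {n : ℕ}

theorem isStrictTotalOrder_perm (σ : Equiv.Perm (Fin n)) :
    IsStrictTotalOrder (Fin n) (fun i j => σ i < σ j) :=
  (RelEmbedding.preimage σ.toEmbedding (· < ·)).isStrictTotalOrder

theorem rankBy_perm (σ : Equiv.Perm (Fin n)) (i : Fin n) :
    rankBy (fun i j => σ i < σ j) i = σ i := by
  rw [rankBy, show {c | σ c < σ i} = σ ⁻¹' Set.Iio (σ i) from rfl,
    Set.ncard_preimage_of_injective_subset_range σ.injective (by simp),
    ← Finset.coe_Iio, Set.ncard_coe_finset, Fin.card_Iio]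

/-- A strict total order on `Fin n` is the pullback of `<` along its rank permutation. -/
noncomputable def permEquivStrictTotalOrder :
    Equiv.Perm (Fin n) ≃ {r : Fin n → Fin n → Prop // IsStrictTotalOrder (Fin n) r} where
  toFun σ := ⟨fun i j => σ i < σ j, isStrictTotalOrder_perm σ⟩
  invFun r :=
    have := r.2
    Equiv.ofBijective (fun i => ⟨rankBy r.1 i, by simpa using rankBy_lt_card i⟩)
      (Finite.injective_iff_bijective.mp fun i j h => rankBy_injective (Fin.mk.inj_iff.mp h))
  left_inv σ := Equiv.ext fun i => Fin.ext (rankBy_perm σ i)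
  right_inv r := by
    have := r.2
    ext i j
    exact rankBy_lt_rankBy_iff

theorem card_isStrictTotalOrder :
    Nat.card {r : Fin n → Fin n → Prop // IsStrictTotalOrder (Fin n) r} = n.factorial := by
  rw [← Nat.card_congr permEquivStrictTotalOrder, Nat.card_perm, Nat.card_fin]

end StrictTotalOrderFin

namespace Brandt

variable {n : ℕ}

@[simp] theorem bmul_none_left (y : B n) : bmul none y = none := by
  cases y <;> rfl

@[simp] theorem bmul_none_right (x : B n) : bmul x none = none := by
  rcases x with _ | ⟨i, j⟩ <;> rfl

@[simp] theorem bmul_some_some (i j k l : Fin n) :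
    bmul (some (i, j)) (some (k, l)) = if j = k then some (i, l) else none := rfl

@[simp] theorem bprod_none (l : List (B n)) : bprod none l = none := by
  induction l with
  | nil => rfl
  | cons y l ih => simpa [bprod] using ih

theorem bprod_replicate_idem (i : Fin n) (m : ℕ) :
    bprod (some (i, i)) (List.replicate m (some (i, i))) = some (i, i) := by
  induction m with
  | zero => rfl
  | succ m ih => simpa [List.replicate_succ, bprod] using ih

theorem IsSub.some_mem {T : Set (B n)} (hT : IsSub T) {i j k : Fin n}
    (hij : some (i, j) ∈ T) (hjk : some (j, k) ∈ T) : some (i, k) ∈ T := by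
  simpa using hT _ hij _ hjk

/-- In a nonzero product `(a, c) * y₁ * ⋯ * y_k` with `y_m ∈ T`, each factor moves the second
index along an edge of `T`. -/
theorem add_length_le_of_bprod_eq_some {T : Set (B n)} {f : Fin n → ℕ}
    (hf : ∀ i j, some (i, j) ∈ T → f i < f j) {l : List (B n)} (hl : ∀ y ∈ l, y ∈ T)
    {a c a' b : Fin n} (h : bprod (some (a, c)) l = some (a', b)) :
    f c + l.length ≤ f b := by
  induction l generalizing a c with
  | nil =>
    obtain ⟨-, rfl⟩ := Prod.ext_iff.mp (Option.some_injective _ h)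
    simp
  | cons y l ih =>
    rcases y with _ | ⟨p, q⟩
    · simp [bprod] at h
    by_cases hcp : c = p
    · subst hcp
      simp only [bprod, bmul_some_some, if_true] at h
      have hcq := hf _ _ (hl _ List.mem_cons_self)
      have := ih (fun y hy => hl y (List.mem_cons_of_mem _ hy)) h
      simp only [List.length_cons]
      omega
    · simp [bprod, hcp] at h

theorem isNilpSub_iff {T : Set (B n)} :
    IsNilpSub T ↔ IsSub T ∧ none ∈ T ∧ ∀ i : Fin n, some (i, i) ∉ T := by
  refine ⟨fun ⟨hsub, h0, k, hk, hnil⟩ => ⟨hsub, h0, fun i hi => ?_⟩,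
    fun ⟨hsub, h0, hirr⟩ => ⟨hsub, h0, n + 1, by omega, ?_⟩⟩
  · have := hnil _ (List.replicate (k - 1) (some (i, i))) hi
      (fun y hy => List.eq_of_mem_replicate hy ▸ hi) (by rw [List.length_replicate]; omega)
    simp [bprod_replicate_idem] at this
  · -- Products of `n + 1` elements vanish since ranks in the strict order of `T` are below `n`.
    let r : Fin n → Fin n → Prop := fun i j => some (i, j) ∈ T
    have : IsStrictOrder (Fin n) r :=
      { irrefl := hirr, trans := fun _ _ _ => IsSub.some_mem hsub }
    rintro (_ | ⟨a, c⟩) l - hl hlen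
    · exact bprod_none l
    rcases hres : bprod (some (a, c)) l with _ | ⟨a', b⟩
    · rfl
    have := add_length_le_of_bprod_eq_some (f := rankBy r)
      (fun _ _ => rankBy_lt_rankBy (r := r)) hl hres
    have := rankBy_lt_card (r := r) b
    simp only [Nat.card_fin] at this
    omega

def ofRel (r : Fin n → Fin n → Prop) : Set (B n) :=
  {none} ∪ {x | ∃ i j : Fin n, r i j ∧ x = some (i, j)}

def IsMaxNilpSub (T : Set (B n)) : Prop :=
  IsNilpSub T ∧ ∀ U : Set (B n), IsNilpSub U → T ⊆ U → U = T

@[simp] theorem none_mem_ofRel (r : Fin n → Fin n → Prop) : none ∈ ofRel r :=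
  Or.inl rfl

@[simp] theorem some_mem_ofRel {r : Fin n → Fin n → Prop} {i j : Fin n} :
    some (i, j) ∈ ofRel r ↔ r i j := by
  simp [ofRel]

theorem subset_ofRel_iff {T : Set (B n)} {r : Fin n → Fin n → Prop} :
    T ⊆ ofRel r ↔ ∀ i j, some (i, j) ∈ T → r i j := by
  refine ⟨fun h i j hij => some_mem_ofRel.mp (h hij), fun h => ?_⟩
  rintro (_ | ⟨i, j⟩) hx
  exacts [none_mem_ofRel r, some_mem_ofRel.mpr (h i j hx)]

theorem ofRel_injective : Function.Injective (ofRel (n := n)) := by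
  intro r s h
  ext i j
  rw [← some_mem_ofRel (r := r), h, some_mem_ofRel]

theorem isNilpSub_ofRel (r : Fin n → Fin n → Prop) [IsStrictOrder (Fin n) r] :
    IsNilpSub (ofRel r) := by
  refine isNilpSub_iff.mpr ⟨?_, none_mem_ofRel r, fun i => by simp [irrefl_of r i]⟩
  rintro (_ | ⟨i, j⟩) hx (_ | ⟨k, l⟩) hy <;> simp only [bmul_none_left, bmul_none_right,
    none_mem_ofRel, bmul_some_some]
  split_ifs with hjk
  · subst hjk
    exact some_mem_ofRel.mpr (_root_.trans (some_mem_ofRel.mp hx) (some_mem_ofRel.mp hy))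
  · exact none_mem_ofRel r

theorem isStrictOrder_of_isNilpSub {T : Set (B n)} (hT : IsNilpSub T) :
    IsStrictOrder (Fin n) (fun i j => some (i, j) ∈ T) :=
  have ⟨hsub, _, hirr⟩ := isNilpSub_iff.mp hT
  { irrefl := hirr, trans := fun _ _ _ => IsSub.some_mem hsub }

theorem isMaxNilpSub_iff {T : Set (B n)} :
    IsMaxNilpSub T ↔
      ∃ r : Fin n → Fin n → Prop, IsStrictTotalOrder (Fin n) r ∧ T = ofRel r := by
  constructor
  · rintro ⟨hT, hmax⟩
    have := isStrictOrder_of_isNilpSub hT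
    obtain ⟨s, hs, hTs⟩ := exists_isStrictTotalOrder_extension fun i j => some (i, j) ∈ T
    exact ⟨s, hs, (hmax _ (isNilpSub_ofRel s) (subset_ofRel_iff.mpr hTs)).symm⟩
  · rintro ⟨r, hr, rfl⟩
    refine ⟨isNilpSub_ofRel r, fun U hU hrU => ?_⟩
    have := isStrictOrder_of_isNilpSub hU
    refine (subset_ofRel_iff.mpr fun i j hij => ?_).antisymm hrU
    exact rel_of_le_of_isStrictTotalOrder (s := fun a b => some (a, b) ∈ U)
      (fun a b hab => hrU (some_mem_ofRel.mpr hab)) hij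

noncomputable def strictTotalOrderEquivMaxNilpSub :
    {r : Fin n → Fin n → Prop // IsStrictTotalOrder (Fin n) r} ≃
      {T : Set (B n) // IsMaxNilpSub T} :=
  Equiv.ofBijective (fun r => ⟨ofRel r.1, isMaxNilpSub_iff.mpr ⟨r.1, r.2, rfl⟩⟩)
    ⟨fun _ _ h => Subtype.ext (ofRel_injective (congrArg Subtype.val h)),
     fun T =>
      have ⟨r, hr, hT⟩ := isMaxNilpSub_iff.mp T.2
      ⟨⟨r, hr⟩, Subtype.ext hT.symm⟩⟩

end Brandt

/-- The maximal nilpotent subsemigroups of `B(n)` are exactly those of the form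
`{(i,j) : i <_L j} ∪ {0}` for a strict linear order `L` on `{1,…,n}`; in
particular there are exactly `n!` of them. -/
theorem stmt6 (n : ℕ) :
    (∀ T : Set (B n),
      (IsNilpSub T ∧ ∀ U : Set (B n), IsNilpSub U → T ⊆ U → U = T) ↔
        (∃ r : Fin n → Fin n → Prop, IsStrictTotalOrder (Fin n) r ∧
          T = {none} ∪ {x | ∃ i j : Fin n, r i j ∧ x = some (i, j)})) ∧
    Nat.card {T : Set (B n) //
      IsNilpSub T ∧ ∀ U : Set (B n), IsNilpSub U → T ⊆ U → U = T} = Nat.factorial n :=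
  ⟨fun _ => Brandt.isMaxNilpSub_iff,
    (Nat.card_congr Brandt.strictTotalOrderEquivMaxNilpSub).symm.trans card_isStrictTotalOrder⟩
end

section
/- Every transitive binary relation R on an n-element set decomposes uniquely as the disjoint union of a partial equivalence relation Π and a strict partial order P such that RP ∪ PR ⊆ P (composition of relations). -/
/-- Every transitive binary relation `R` on an `n`-element set decomposes uniquely
as a disjoint union `R = Π ∪ P` of a partial equivalence relation `Π` and a strict
partial order `P` with `RP ∪ PR ⊆ P`. -/
theorem stmt8 (n : ℕ) (R : Set (Fin n × Fin n))
    (hR : ∀ i j k : Fin n, (i, j) ∈ R → (j, k) ∈ R → (i, k) ∈ R) :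
    ∃! p : Set (Fin n × Fin n) × Set (Fin n × Fin n),
      (∀ q ∈ p.1, (q.2, q.1) ∈ p.1) ∧
      (∀ i j k : Fin n, (i, j) ∈ p.1 → (j, k) ∈ p.1 → (i, k) ∈ p.1) ∧
      (∀ i : Fin n, (i, i) ∉ p.2) ∧
      (∀ i j k : Fin n, (i, j) ∈ p.2 → (j, k) ∈ p.2 → (i, k) ∈ p.2) ∧
      R = p.1 ∪ p.2 ∧ p.1 ∩ p.2 = ∅ ∧
      relComp R p.2 ∪ relComp p.2 R ⊆ p.2 := by
  classical
  refine ⟨({q ∈ R | (q.2, q.1) ∈ R}, {q ∈ R | (q.2, q.1) ∉ R}), ?_, ?_⟩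
  · refine ⟨?_, ?_, ?_, ?_, ?_, ?_, ?_⟩
    · rintro ⟨i, j⟩ ⟨h1, h2⟩; exact ⟨h2, h1⟩
    · rintro i j k ⟨h1, h2⟩ ⟨h3, h4⟩
      exact ⟨hR i j k h1 h3, hR k j i h4 h2⟩
    · rintro i ⟨h1, h2⟩; exact h2 h1
    · rintro i j k ⟨h1, h2⟩ ⟨h3, h4⟩
      exact ⟨hR i j k h1 h3, fun h => h2 (hR j k i h3 h)⟩
    · ext ⟨i, j⟩
      simp only [Set.mem_union, Set.mem_setOf_eq]
      constructor
      · intro h; by_cases hji : (j, i) ∈ R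
        · exact Or.inl ⟨h, hji⟩
        · exact Or.inr ⟨h, hji⟩
      · rintro (⟨h, _⟩ | ⟨h, _⟩) <;> exact h
    · ext ⟨i, j⟩
      simp only [Set.mem_inter_iff, Set.mem_setOf_eq, Set.mem_empty_iff_false, iff_false]
      rintro ⟨⟨_, h2⟩, ⟨_, h4⟩⟩; exact h4 h2
    · rintro ⟨i, j⟩ (⟨k, hik, hkj, hjk⟩ | ⟨k, ⟨hik, hki⟩, hkj⟩)
      · exact ⟨hR i k j hik hkj, fun h => hjk (hR j i k h hik)⟩
      · exact ⟨hR i k j hik hkj, fun h => hki (hR k j i hkj h)⟩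
  · rintro ⟨Pi, P⟩ ⟨hsym, htrPi, hirr, htrP, hun, hdis, hcomp⟩
    have hP : P = {q ∈ R | (q.2, q.1) ∉ R} := by
      ext ⟨i, j⟩
      simp only [Set.mem_setOf_eq]
      constructor
      · intro hij
        have hijR : (i, j) ∈ R := hun ▸ Or.inr hij
        refine ⟨hijR, fun hji => ?_⟩
        have : (j, j) ∈ P := hcomp (Or.inl ⟨i, hji, hij⟩)
        exact hirr j this
      · rintro ⟨hijR, hji⟩
        rcases (hun ▸ hijR : (i, j) ∈ Pi ∪ P) with h | h
        · exact absurd (hun ▸ Or.inl (hsym _ h) : (j, i) ∈ R) hji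
        · exact h
    have hPi : Pi = {q ∈ R | (q.2, q.1) ∈ R} := by
      ext ⟨i, j⟩
      simp only [Set.mem_setOf_eq]
      constructor
      · intro hij
        have hijR : (i, j) ∈ R := hun ▸ Or.inl hij
        refine ⟨hijR, ?_⟩
        by_contra hji
        have : (i, j) ∈ P := hP ▸ (⟨hijR, hji⟩ : (i,j) ∈ {q ∈ R | (q.2, q.1) ∉ R})
        exact Set.eq_empty_iff_forall_notMem.mp hdis (i, j) ⟨hij, this⟩
      · rintro ⟨hijR, hji⟩
        rcases (hun ▸ hijR : (i, j) ∈ Pi ∪ P) with h | h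
        · exact h
        · exact absurd hji (hP ▸ h).2
    exact Prod.ext hPi hP
end

section
/- If N is a finite nonempty nilpotent semigroup with |N| = n, then the elements of N can be enumerated as sphabet_1, ..., s_n so that for every i, the subsemigroup generated by {s_1,...,s_i} equals {s_1,...,s_i}; consequently every subset of N is a face of the subsemigroup complex of N, i.e., the complex is the uniform matroid U_{n,n}. -/
/-!
Rank each element `x` by the size of its principal right ideal `xN¹ = {x} ∪ xN`. Always
`xyN¹ ⊆ xN¹`, and equality forces `x = x * a` for some `a`; then `x = x * aᵏ⁻¹ = 0` by
nilpotency, so `x * y = x`. Hence right multiplication either fixes an element or strictly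
lowers its rank. List the elements by increasing rank: every prefix contains all elements of
smaller rank than one of its members, so it is closed under multiplication. In such a listing
of any subset, every element of the closure of the predecessors of `s` is a predecessor or has
rank strictly below that of `s`, so `s` itself lies outside that closure.
-/

section SortedLists

variable {α : Type*}

theorem List.Pairwise.mem_take_of_lt {f : α → ℕ} {l : List α}
    (hl : l.Pairwise (f · ≤ f ·)) {i : ℕ} {x w : α} (hx : x ∈ l.take i) (hw : w ∈ l)
    (hlt : f w < f x) : w ∈ l.take i := by
  rw [← List.take_append_drop i l, List.mem_append] at hw
  exact hw.resolve_right fun hw' => (hl.rel_of_mem_take_of_mem_drop hx hw').not_gt hlt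

theorem Finset.exists_nodup_pairwise_le (f : α → ℕ) (s : Finset α) :
    ∃ l : List α, l.Nodup ∧ (∀ x, x ∈ l ↔ x ∈ s) ∧ l.Pairwise (f · ≤ f ·) := by
  have hperm := List.mergeSort_perm s.toList (fun a b => decide (f a ≤ f b))
  refine ⟨_, hperm.nodup_iff.mpr s.nodup_toList, fun x => by rw [hperm.mem_iff, mem_toList], ?_⟩
  simpa using List.pairwise_mergeSort (le := fun a b => decide (f a ≤ f b))
    (fun _ _ _ => by simpa using le_trans) (fun a b => by simpa using le_total (f a) (f b)) _

end SortedLists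

section RankedSemigroup

variable {N : Type*} [Mul N] {f : N → ℕ} {l : List N}

theorem closure_take_eq_of_rank (hf : ∀ x y : N, x * y = x ∨ f (x * y) < f x)
    (hl : l.Pairwise (f · ≤ f ·)) (hall : ∀ x, x ∈ l) (i : ℕ) :
    (Subsemigroup.closure {x | x ∈ l.take i} : Set N) = {x | x ∈ l.take i} :=
  let S : Subsemigroup N :=
    { carrier := {x | x ∈ l.take i}
      mul_mem' := fun {x y} hx _ => (hf x y).elim (fun h => by rwa [h])
        fun h => hl.mem_take_of_lt hx (hall _) h }
  congrArg SetLike.coe (Subsemigroup.closure_eq S)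

theorem get_notMem_closure_take_of_rank (hf : ∀ x y : N, x * y = x ∨ f (x * y) < f x)
    (hl : l.Pairwise (f · ≤ f ·)) (hnd : l.Nodup) (i : ℕ) (h : i < l.length) :
    l.get ⟨i, h⟩ ∉ Subsemigroup.closure {x | x ∈ l.take i} := by
  have hg : l[i] ∈ l.drop i := List.drop_eq_getElem_cons h ▸ List.mem_cons_self
  have hS : ∀ x ∈ l.take i, f x ≤ f l[i] := fun x hx => hl.rel_of_mem_take_of_mem_drop hx hg
  have hclosure :
      ∀ p ∈ Subsemigroup.closure {x | x ∈ l.take i}, p ∈ l.take i ∨ f p < f l[i] := by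
    intro p hp
    induction hp using Subsemigroup.closure_induction with
    | mem x hx => exact .inl hx
    | mul x y _ _ ihx _ =>
      rcases hf x y with h | h
      · rwa [h]
      · exact .inr (h.trans_le (ihx.elim (hS x) le_of_lt))
  intro hmem
  rcases hclosure _ hmem with h | h
  · exact List.disjoint_take_drop hnd le_rfl h hg
  · exact lt_irrefl _ h

end RankedSemigroup

section PrincipalRightIdeal

variable {N : Type*} [Semigroup N]

def principalRightIdeal (x : N) : Set N := insert x (Set.range (x * ·))

theorem principalRightIdeal_mul_subset (x y : N) :
    principalRightIdeal (x * y) ⊆ principalRightIdeal x := by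
  rintro w (rfl | ⟨u, rfl⟩)
  · exact Set.mem_insert_of_mem _ ⟨y, rfl⟩
  · exact Set.mem_insert_of_mem _ ⟨y * u, (mul_assoc x y u).symm⟩

theorem exists_mul_eq_self_of_mem_principalRightIdeal_mul {x y : N}
    (h : x ∈ principalRightIdeal (x * y)) : ∃ a, x * a = x := by
  rcases h with h | ⟨u, hu⟩
  · exact ⟨y, h.symm⟩
  · exact ⟨y * u, by rw [← mul_assoc]; exact hu⟩

theorem mul_eq_self_or_ncard_principalRightIdeal_lt [Finite N]
    (hfix : ∀ x a : N, x * a = x → ∀ y, x * y = x) (x y : N) :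
    x * y = x ∨ (principalRightIdeal (x * y)).ncard < (principalRightIdeal x).ncard := by
  by_cases hx : x ∈ principalRightIdeal (x * y)
  · obtain ⟨a, ha⟩ := exists_mul_eq_self_of_mem_principalRightIdeal_mul hx
    exact .inl (hfix x a ha y)
  · refine .inr (Set.ncard_lt_ncard ?_)
    exact (Set.ssubset_iff_of_subset (principalRightIdeal_mul_subset x y)).mpr
      ⟨x, Set.mem_insert x _, hx⟩

theorem foldl_replicate_of_mul_eq_self {x a : N} (h : x * a = x) (n : ℕ) :
    (List.replicate n a).foldl (· * ·) x = x := by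
  induction n with
  | zero => rfl
  | succ n ih => rwa [List.replicate_succ, List.foldl_cons, h]

end PrincipalRightIdeal

theorem stmt9_general (N : Type*) [Semigroup N] [Fintype N]
    (z : N) (hz : ∀ x : N, z * x = z ∧ x * z = z)
    (hnil : ∃ k : ℕ, 1 ≤ k ∧
      ∀ (x : N) (l : List N), l.length + 1 = k → l.foldl (· * ·) x = z) :
    (∃ l : List N, l.Nodup ∧ (∀ x : N, x ∈ l) ∧
      ∀ i : ℕ, i ≤ l.length →
        (Subsemigroup.closure {x | x ∈ l.take i} : Set N) = {x | x ∈ l.take i}) ∧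
    (∀ X : Set N, ∃ l : List N, l.Nodup ∧ {x | x ∈ l} = X ∧
      ∀ (i : ℕ) (h : i < l.length),
        l.get ⟨i, h⟩ ∉ Subsemigroup.closure {x | x ∈ l.take i}) := by
  obtain ⟨k, hk, hnil⟩ := hnil
  have hfix : ∀ x a : N, x * a = x → ∀ y, x * y = x := fun x a ha y => by
    have hxz : x = z :=
      (foldl_replicate_of_mul_eq_self ha (k - 1)).symm.trans (hnil x _ (by simp; omega))
    rw [hxz, (hz y).1]
  have hf := mul_eq_self_or_ncard_principalRightIdeal_lt hfix
  set rank : N → ℕ := fun x => (principalRightIdeal x).ncard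
  refine ⟨?_, fun X => ?_⟩
  · obtain ⟨l, hnd, hmem, hl⟩ := Finset.exists_nodup_pairwise_le rank Finset.univ
    have hall : ∀ x, x ∈ l := fun x => (hmem x).mpr (Finset.mem_univ x)
    exact ⟨l, hnd, hall, fun i _ => closure_take_eq_of_rank hf hl hall i⟩
  · classical
    obtain ⟨l, hnd, hmem, hl⟩ := Finset.exists_nodup_pairwise_le rank X.toFinset
    exact ⟨l, hnd, by ext; simp [hmem], get_notMem_closure_take_of_rank hf hl hnd⟩

/-- If `N` is a finite nonempty nilpotent semigroup, then its elements can be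
enumerated `s₁, …, s_n` so that each `{s₁,…,s_i}` is a subsemigroup (equal to the
subsemigroup it generates); consequently every subset of `N` is a face of the
subsemigroup complex of `N`, i.e. `H(N)` is the uniform matroid `U_{n,n}`. -/
theorem stmt9 (N : Type*) [Semigroup N] [Fintype N] [Nonempty N]
    (z : N) (hz : ∀ x : N, z * x = z ∧ x * z = z)
    (hnil : ∃ k : ℕ, 1 ≤ k ∧
      ∀ (x : N) (l : List N), l.length + 1 = k → l.foldl (· * ·) x = z) :
    (∃ l : List N, l.Nodup ∧ (∀ x : N, x ∈ l) ∧
      ∀ i : ℕ, i ≤ l.length →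
        (Subsemigroup.closure {x | x ∈ l.take i} : Set N) = {x | x ∈ l.take i}) ∧
    (∀ X : Set N, ∃ l : List N, l.Nodup ∧ {x | x ∈ l} = X ∧
      ∀ (i : ℕ) (h : i < l.length),
        l.get ⟨i, h⟩ ∉ Subsemigroup.closure {x | x ∈ l.take i}) :=
  stmt9_general N z hz hnil
end

section
/- A subset X of B(n) \ {0} with no idempotents generates a (full) inverse subsemigroup of B(n) minimally if and only if the underlying undirected graph of X is an oriented (spanning) forest of the complete graph K_n. -/
/-- The inverse subsemigroup of `B(n)` generated by `X`. -/
def invGen {n : ℕ} (X : Set (B n)) : Set (B n) :=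
  ⋂₀ {T | IsSub T ∧ InvClosed T ∧ X ⊆ T}

/-- The full inverse subsemigroup of `B(n)` generated by `X` (containing all
idempotents). -/
def fullInvGen {n : ℕ} (X : Set (B n)) : Set (B n) :=
  ⋂₀ {T | IsSub T ∧ InvClosed T ∧ none ∈ T ∧ (∀ i : Fin n, some (i, i) ∈ T) ∧ X ⊆ T}

/-!
Every off-diagonal element `(i,j)` of the (full) inverse subsemigroup generated by `X` is a
product of generators and their inverses along a walk from `i` to `j` in the underlying graph
`Γ(X)`, and conversely every such walk yields `(i,j)`. So `X` generates minimally iff no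
`(i,j) ∈ X` is recovered from the other generators, i.e. iff `i` and `j` are disconnected in
`Γ(X \ {(i,j)})`. This says exactly that every edge of `Γ(X)` is a bridge and is contributed by
a single generator: `Γ(X)` is a forest oriented by `X`.
-/

theorem ClosureOperator.forall_ssubset_closure_ne_iff {α : Type*}
    (c : ClosureOperator (Set α)) (X : Set α) :
    (∀ Y ⊂ X, c Y ≠ c X) ↔ ∀ x ∈ X, x ∉ c (X \ {x}) := by
  constructor
  · intro hmin x hx hxc
    refine hmin _ (Set.sdiff_singleton_ssubset.mpr hx) (le_antisymm (c.monotone Set.sdiff_subset) ?_)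
    refine ClosureOperator.le_closure_iff.mp fun y hy => ?_
    by_cases hyx : y = x
    · exact hyx ▸ hxc
    · exact c.le_closure _ ⟨hy, hyx⟩
  · rintro h Y hYX hcY
    obtain ⟨x, hxX, hxY⟩ := Set.exists_of_ssubset hYX
    have hY : Y ⊆ X \ {x} := fun y hy => ⟨hYX.1 hy, fun hyx => hxY (hyx ▸ hy)⟩
    exact h x hxX (c.monotone hY (hcY ▸ c.le_closure X hxX))

namespace BrandtSemigroup

open SimpleGraph

variable {n : ℕ}

abbrev underlyingGraph (X : Set (B n)) : SimpleGraph (Fin n) :=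
  fromRel fun i j => some (i, j) ∈ X

theorem underlyingGraph_adj {X : Set (B n)} {i j : Fin n} :
    (underlyingGraph X).Adj i j ↔ i ≠ j ∧ (some (i, j) ∈ X ∨ some (j, i) ∈ X) :=
  fromRel_adj _ _ _

theorem underlyingGraph_sdiff_singleton {X : Set (B n)} {i j : Fin n} (hji : some (j, i) ∉ X) :
    underlyingGraph (X \ {some (i, j)}) = (underlyingGraph X).deleteEdges {s(i, j)} := by
  ext a b
  simp only [underlyingGraph_adj, deleteEdges_adj, Set.mem_sdiff_singleton, Set.mem_singleton_iff,
    Sym2.eq_iff]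
  grind

theorem forall_not_reachable_sdiff_iff (X : Set (B n)) :
    (∀ i j, some (i, j) ∈ X → ¬ (underlyingGraph (X \ {some (i, j)})).Reachable i j) ↔
      (underlyingGraph X).IsAcyclic ∧ ∀ i j, some (i, j) ∈ X → some (j, i) ∉ X := by
  constructor
  · intro h
    have hanti : ∀ i j, some (i, j) ∈ X → some (j, i) ∉ X := by
      intro i j hij hji
      by_cases hne : i = j
      · exact h i j hij (hne ▸ Reachable.refl i)
      refine h i j hij (Adj.reachable (underlyingGraph_adj.mpr ⟨hne, Or.inr ⟨hji, ?_⟩⟩))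
      simp [hne]
    refine ⟨isAcyclic_iff_forall_adj_isBridge.mpr fun i j hadj => ?_, hanti⟩
    obtain ⟨-, hij | hji⟩ := underlyingGraph_adj.mp hadj
    · rw [isBridge_iff, ← underlyingGraph_sdiff_singleton (hanti i j hij)]
      exact h i j hij
    · rw [Sym2.eq_swap, isBridge_iff, ← underlyingGraph_sdiff_singleton (hanti j i hji)]
      exact h j i hji
  · rintro ⟨hacyc, hanti⟩ i j hij
    have hne : i ≠ j := by
      rintro rfl
      exact hanti i i hij hij
    rw [underlyingGraph_sdiff_singleton (hanti i j hij), ← isBridge_iff]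
    exact isAcyclic_iff_forall_adj_isBridge.mp hacyc (underlyingGraph_adj.mpr ⟨hne, Or.inl hij⟩)

theorem invGen_isSub (X : Set (B n)) : IsSub (invGen X) :=
  fun x hx y hy T hT => hT.1 x (hx T hT) y (hy T hT)

theorem invGen_invClosed (X : Set (B n)) : InvClosed (invGen X) :=
  fun i j h T hT => hT.2.1 i j (h T hT)

theorem subset_invGen (X : Set (B n)) : X ⊆ invGen X :=
  fun _ hx _ hT => hT.2.2 hx

theorem invGen_subset {X T : Set (B n)} (hT : IsSub T) (hT' : InvClosed T) (hXT : X ⊆ T) :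
    invGen X ⊆ T :=
  fun _ hx => hx T ⟨hT, hT', hXT⟩

def invGenClosure : ClosureOperator (Set (B n)) :=
  .ofPred invGen (fun T => IsSub T ∧ InvClosed T) subset_invGen
    (fun X => ⟨invGen_isSub X, invGen_invClosed X⟩) fun _ _ hXT hT => invGen_subset hT.1 hT.2 hXT

theorem fullInvGen_isSub (X : Set (B n)) : IsSub (fullInvGen X) :=
  fun x hx y hy T hT => hT.1 x (hx T hT) y (hy T hT)

theorem fullInvGen_invClosed (X : Set (B n)) : InvClosed (fullInvGen X) :=
  fun i j h T hT => hT.2.1 i j (h T hT)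

theorem none_mem_fullInvGen (X : Set (B n)) : none ∈ fullInvGen X :=
  fun _ hT => hT.2.2.1

theorem some_self_mem_fullInvGen (X : Set (B n)) (i : Fin n) : some (i, i) ∈ fullInvGen X :=
  fun _ hT => hT.2.2.2.1 i

theorem subset_fullInvGen (X : Set (B n)) : X ⊆ fullInvGen X :=
  fun _ hx _ hT => hT.2.2.2.2 hx

theorem fullInvGen_subset {X T : Set (B n)} (hT : IsSub T) (hT' : InvClosed T) (h0 : none ∈ T)
    (hid : ∀ i, some (i, i) ∈ T) (hXT : X ⊆ T) : fullInvGen X ⊆ T :=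
  fun _ hx => hx T ⟨hT, hT', h0, hid, hXT⟩

def fullInvGenClosure : ClosureOperator (Set (B n)) :=
  .ofPred fullInvGen
    (fun T => IsSub T ∧ InvClosed T ∧ none ∈ T ∧ ∀ i, some (i, i) ∈ T) subset_fullInvGen
    (fun X => ⟨fullInvGen_isSub X, fullInvGen_invClosed X, none_mem_fullInvGen X,
      some_self_mem_fullInvGen X⟩)
    fun _ _ hXT hT => fullInvGen_subset hT.1 hT.2.1 hT.2.2.1 hT.2.2.2 hXT

theorem invGen_subset_fullInvGen (X : Set (B n)) : invGen X ⊆ fullInvGen X :=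
  invGen_subset (fullInvGen_isSub X) (fullInvGen_invClosed X) (subset_fullInvGen X)

theorem some_mem_invGen_of_walk {X : Set (B n)} {i j : Fin n} (p : (underlyingGraph X).Walk i j)
    (hij : i ≠ j) : some (i, j) ∈ invGen X := by
  induction p with
  | nil => exact absurd rfl hij
  | @cons i k j hadj p ih =>
    have hik : some (i, k) ∈ invGen X := by
      rcases (underlyingGraph_adj.mp hadj).2 with hik | hki
      · exact subset_invGen X hik
      · exact invGen_invClosed X k i (subset_invGen X hki)
    by_cases hkj : k = j
    · exact hkj ▸ hik
    · simpa [bmul] using invGen_isSub X _ hik _ (ih hkj)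

/-- The elements of `B(n)` whose endpoints are connected in `Γ(X)` form a full inverse
subsemigroup containing `X`. -/
theorem reachable_of_some_mem_fullInvGen {X : Set (B n)} {i j : Fin n}
    (h : some (i, j) ∈ fullInvGen X) : (underlyingGraph X).Reachable i j := by
  let T : Set (B n) := {z | ∀ p ∈ z, (underlyingGraph X).Reachable p.1 p.2}
  have hnone : none ∈ T := fun _ hp => nomatch hp
  suffices fullInvGen X ⊆ T from this h (i, j) rfl
  refine fullInvGen_subset ?_ ?_ hnone (fun k _ hk => ?_) ?_
  · rintro (_ | ⟨a, b⟩) hx (_ | ⟨c, d⟩) hy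
    any_goals exact hnone
    simp only [bmul]
    split_ifs with hbc
    · rintro _ ⟨⟩
      exact (hx _ rfl).trans (hbc ▸ hy _ rfl)
    · exact hnone
  · rintro a b hab _ ⟨⟩
    exact (hab _ rfl).symm
  · cases hk
    rfl
  · rintro _ hz ⟨a, b⟩ rfl
    by_cases hab : a = b
    · exact hab ▸ Reachable.refl a
    · exact Adj.reachable (underlyingGraph_adj.mpr ⟨hab, Or.inl hz⟩)

theorem some_mem_invGen_iff {X : Set (B n)} {i j : Fin n} (hij : i ≠ j) :
    some (i, j) ∈ invGen X ↔ (underlyingGraph X).Reachable i j :=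
  ⟨fun h => reachable_of_some_mem_fullInvGen (invGen_subset_fullInvGen X h),
    fun ⟨p⟩ => some_mem_invGen_of_walk p hij⟩

theorem some_mem_fullInvGen_iff {X : Set (B n)} {i j : Fin n} (hij : i ≠ j) :
    some (i, j) ∈ fullInvGen X ↔ (underlyingGraph X).Reachable i j :=
  ⟨reachable_of_some_mem_fullInvGen,
    fun h => invGen_subset_fullInvGen X ((some_mem_invGen_iff hij).mpr h)⟩

theorem forall_ssubset_closure_ne_iff_isAcyclic (c : ClosureOperator (Set (B n)))
    (hc : ∀ (Y : Set (B n)) (i j : Fin n), i ≠ j →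
      (some (i, j) ∈ c Y ↔ (underlyingGraph Y).Reachable i j))
    {X : Set (B n)} (hX : ∀ x ∈ X, ∃ i j : Fin n, i ≠ j ∧ x = some (i, j)) :
    (∀ Y ⊂ X, c Y ≠ c X) ↔
      (underlyingGraph X).IsAcyclic ∧ ∀ i j, some (i, j) ∈ X → some (j, i) ∉ X := by
  rw [c.forall_ssubset_closure_ne_iff, ← forall_not_reachable_sdiff_iff]
  constructor
  · intro h i j hij
    obtain ⟨_, _, hne, ⟨⟩⟩ := hX _ hij
    exact (hc _ i j hne).not.mp (h _ hij)
  · intro h x hx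
    obtain ⟨i, j, hne, rfl⟩ := hX x hx
    exact (hc _ i j hne).not.mpr (h i j hx)

end BrandtSemigroup

/-- A set `X` of non-idempotents of `B(n)` is a minimal generating set of the
(full) inverse subsemigroup it generates iff `Γ(X)` is an oriented (spanning)
forest of `K_n`. -/
theorem stmt11 (n : ℕ) (X : Set (B n))
    (hX : ∀ x ∈ X, ∃ i j : Fin n, i ≠ j ∧ x = some (i, j)) :
    ((∀ Y : Set (B n), Y ⊂ X → invGen Y ≠ invGen X) ↔
      ((SimpleGraph.fromRel (fun i j : Fin n => some (i, j) ∈ X)).IsAcyclic ∧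
        ∀ i j : Fin n, some (i, j) ∈ X → some (j, i) ∉ X)) ∧
    ((∀ Y : Set (B n), Y ⊂ X → fullInvGen Y ≠ fullInvGen X) ↔
      ((SimpleGraph.fromRel (fun i j : Fin n => some (i, j) ∈ X)).IsAcyclic ∧
        ∀ i j : Fin n, some (i, j) ∈ X → some (j, i) ∉ X)) :=
  ⟨BrandtSemigroup.forall_ssubset_closure_ne_iff_isAcyclic BrandtSemigroup.invGenClosure
      (fun _ _ _ => BrandtSemigroup.some_mem_invGen_iff) hX,
    BrandtSemigroup.forall_ssubset_closure_ne_iff_isAcyclic BrandtSemigroup.fullInvGenClosure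
      (fun _ _ _ => BrandtSemigroup.some_mem_fullInvGen_iff) hX⟩
end

section
/- Let X be a set of non-idempotent elements of B(n). Then X is a face of the complex IH_0(B(n)) (defined via chains of inverse subsemigroups containing 0) if and only if the underlying undirected graph of X is a forest. Consequently, IH_0(B(n)) is isomorphic to the graphic matroid of the complete graph K_n. -/
/-- The inverse subsemigroup of `B(n)` containing `0` generated by `X`. -/
def invGen0 {n : ℕ} (X : Set (B n)) : Set (B n) :=
  ⋂₀ {T | IsSub T ∧ InvClosed T ∧ none ∈ T ∧ X ⊆ T}

lemma List.setOf_mem_append_singleton {α : Type*} (l : List α) (x : α) :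
    {y | y ∈ l ++ [x]} = insert x {y | y ∈ l} := by
  ext
  simp [or_comm]

section

open SimpleGraph

variable {n : ℕ}

lemma bmul_some_some (i j k l : Fin n) :
    bmul (some (i, j)) (some (k, l)) = if j = k then some (i, l) else none :=
  rfl

lemma isSub_invGen0 (Y : Set (B n)) : IsSub (invGen0 Y) :=
  fun _ hx _ hy T hT => hT.1 _ (hx T hT) _ (hy T hT)

lemma invClosed_invGen0 (Y : Set (B n)) : InvClosed (invGen0 Y) :=
  fun _ _ h T hT => hT.2.1 _ _ (h T hT)

lemma subset_invGen0 (Y : Set (B n)) : Y ⊆ invGen0 Y :=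
  fun _ hx _ hT => hT.2.2.2 hx

lemma invGen0_subset {Y T : Set (B n)} (hsub : IsSub T) (hinv : InvClosed T) (h0 : none ∈ T)
    (hY : Y ⊆ T) : invGen0 Y ⊆ T :=
  Set.sInter_subset_of_mem ⟨hsub, hinv, h0, hY⟩

/-- The underlying undirected graph of `Y`. -/
def edgeGraph (Y : Set (B n)) : SimpleGraph (Fin n) :=
  fromRel fun a b => some (a, b) ∈ Y

lemma edgeGraph_insert (Y : Set (B n)) (u v : Fin n) :
    edgeGraph (insert (some (u, v)) Y) = edgeGraph Y ⊔ edge u v := by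
  ext a b
  simp only [edgeGraph, fromRel_adj, sup_adj, edge_adj, Set.mem_insert_iff, Option.some.injEq,
    Prod.mk.injEq]
  tauto

lemma some_mem_invGen0_of_adj {Y : Set (B n)} {a b : Fin n} (h : (edgeGraph Y).Adj a b) :
    some (a, b) ∈ invGen0 Y := by
  rcases ((fromRel_adj _ _ _).1 h).2 with hab | hba
  · exact subset_invGen0 Y hab
  · exact invClosed_invGen0 Y _ _ (subset_invGen0 Y hba)

lemma some_mem_invGen0_of_reachable {Y : Set (B n)} {a b : Fin n} (hab : a ≠ b)
    (h : (edgeGraph Y).Reachable a b) : some (a, b) ∈ invGen0 Y := by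
  obtain ⟨p⟩ := h
  induction p with
  | nil => exact absurd rfl hab
  | @cons u v w huv q ih =>
    by_cases hvw : v = w
    · exact hvw ▸ some_mem_invGen0_of_adj huv
    · simpa [bmul_some_some] using
        isSub_invGen0 Y _ (some_mem_invGen0_of_adj huv) _ (ih hvw)

lemma reachable_of_some_mem_invGen0 {Y : Set (B n)} {a b : Fin n}
    (h : some (a, b) ∈ invGen0 Y) : (edgeGraph Y).Reachable a b := by
  set T : Set (B n) := {x | ∀ p ∈ x, (edgeGraph Y).Reachable p.1 p.2}
  have h0 : none ∈ T := fun _ hp => by cases hp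
  have hsub : IsSub T := by
    rintro (_ | ⟨a, b⟩) hx (_ | ⟨c, d⟩) hy
    any_goals exact h0
    rw [bmul_some_some]
    split_ifs with hbc
    · rintro _ ⟨⟩
      exact (hx _ rfl).trans (hbc ▸ hy _ rfl)
    · exact h0
  have hinv : InvClosed T := fun a b h p hp => by
    cases hp; exact (h _ rfl).symm
  have hY : Y ⊆ T := by
    rintro (_ | ⟨a, b⟩) hx p hp
    · cases hp
    · cases hp
      by_cases hab : a = b
      · exact hab ▸ Reachable.refl _
      · exact Adj.reachable ((fromRel_adj _ _ _).2 ⟨hab, Or.inl hx⟩)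
  exact invGen0_subset hsub hinv h0 hY h _ rfl

lemma some_mem_invGen0_iff_reachable {Y : Set (B n)} {a b : Fin n} (hab : a ≠ b) :
    some (a, b) ∈ invGen0 Y ↔ (edgeGraph Y).Reachable a b :=
  ⟨reachable_of_some_mem_invGen0, some_mem_invGen0_of_reachable hab⟩

/-- The enumeration condition of a face of `IH₀(B(n))`. -/
def IsInvChain (l : List (B n)) : Prop :=
  ∀ (i : ℕ) (h : i < l.length), l.get ⟨i, h⟩ ∉ invGen0 {x | x ∈ l.take i}

lemma isInvChain_nil : IsInvChain ([] : List (B n)) :=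
  fun _ h => absurd h (Nat.not_lt_zero _)

lemma isInvChain_append_singleton {l : List (B n)} {x : B n} :
    IsInvChain (l ++ [x]) ↔ IsInvChain l ∧ x ∉ invGen0 {y | y ∈ l} := by
  have prefix_eq : ∀ i (hi : i < l.length),
      (l ++ [x]).get ⟨i, by simp; omega⟩ = l.get ⟨i, hi⟩ ∧ (l ++ [x]).take i = l.take i :=
    fun i hi =>
    ⟨List.getElem_append_left hi, List.take_append_of_le_length hi.le⟩
  constructor
  · intro h
    refine ⟨fun i hi => ?_, by simpa using h l.length (by simp)⟩
    rw [← (prefix_eq i hi).1, ← (prefix_eq i hi).2]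
    exact h i _
  · rintro ⟨hl, hx⟩ i hi
    rcases Nat.lt_succ_iff_lt_or_eq.1 (by simpa using hi) with hi | rfl
    · rw [(prefix_eq i hi).1, (prefix_eq i hi).2]
      exact hl i hi
    · simpa using hx

lemma isInvChain_iff_isAcyclic {l : List (B n)}
    (hl : ∀ x ∈ l, ∃ i j : Fin n, i ≠ j ∧ x = some (i, j)) (hnd : l.Nodup)
    (hor : ∀ i j : Fin n, some (i, j) ∈ l → some (j, i) ∉ l) :
    IsInvChain l ↔ (edgeGraph {x | x ∈ l}).IsAcyclic := by
  induction l using List.reverseRecOn with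
  | nil =>
    refine iff_of_true isInvChain_nil ?_
    convert isAcyclic_bot
    ext
    simp [edgeGraph]
  | append_singleton l x ih =>
    obtain ⟨u, v, huv, rfl⟩ := hl x (by simp)
    obtain ⟨hnotin, hnd'⟩ : some (u, v) ∉ l ∧ l.Nodup := by
      rwa [← List.concat_eq_append, List.nodup_concat] at hnd
    have hnadj : ¬(edgeGraph {y | y ∈ l}).Adj u v := by
      simp only [edgeGraph, fromRel_adj, not_and, not_or]
      exact fun _ => ⟨hnotin, fun hvu => hor v u (List.mem_append_left _ hvu) (by simp)⟩
    have ih' := ih (fun y hy => hl y (by simp [hy])) hnd'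
      fun i j h h' => hor i j (List.mem_append_left _ h) (by simp [h'])
    rw [isInvChain_append_singleton, List.setOf_mem_append_singleton, edgeGraph_insert,
      isAcyclic_sup_fromEdgeSet_iff, some_mem_invGen0_iff_reachable huv, ih']
    simp [huv, hnadj]

end

/-- A set `X` of non-idempotents of `B(n)` (one orientation per pair) is a face of
`IH₀(B(n))`, the complex of chains of inverse subsemigroups containing `0`, iff the
underlying undirected graph of `X` is a forest: `IH₀(B(n))` is the graphic matroid
of `K_n`. -/
theorem stmt12 (n : ℕ) (X : Set (B n))
    (hX : ∀ x ∈ X, ∃ i j : Fin n, i ≠ j ∧ x = some (i, j))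
    (hor : ∀ i j : Fin n, some (i, j) ∈ X → some (j, i) ∉ X) :
    (∃ l : List (B n), l.Nodup ∧ {x | x ∈ l} = X ∧
        ∀ (i : ℕ) (h : i < l.length), l.get ⟨i, h⟩ ∉ invGen0 {x | x ∈ l.take i}) ↔
      (SimpleGraph.fromRel (fun i j : Fin n => some (i, j) ∈ X)).IsAcyclic := by
  constructor
  · rintro ⟨l, hnd, rfl, hchain⟩
    exact (isInvChain_iff_isAcyclic hX hnd hor).1 hchain
  · intro hacyc
    obtain ⟨l, hnd, rfl⟩ : ∃ l : List (B n), l.Nodup ∧ {x | x ∈ l} = X :=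
      ⟨X.toFinite.toFinset.toList, Finset.nodup_toList _, by ext; simp⟩
    exact ⟨l, hnd, rfl, (isInvChain_iff_isAcyclic hX hnd hor).2 hacyc⟩
end

section
/- For X ⊆ B(n) and E the set of idempotents of B(n), X is a face of the subsemigroup complex H(B(n)) if and only if X \ E is a face of H(B(n)). -/
section StrictChain

variable {α : Type*}

def IsStrictChain (c : Set α → Set α) : Set α → List α → Prop
  | _, [] => True
  | S, x :: l => x ∉ c S ∧ IsStrictChain c (insert x S) l

theorem isStrictChain_iff_forall_getElem {c : Set α → Set α} {S : Set α} {l : List α} :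
    IsStrictChain c S l ↔ ∀ (i : ℕ) (h : i < l.length), l[i] ∉ c (S ∪ {x | x ∈ l.take i}) := by
  induction l generalizing S with
  | nil => simp [IsStrictChain]
  | cons x l ih =>
    have hset (i : ℕ) : S ∪ {y | y = x ∨ y ∈ l.take i} = insert x S ∪ {y | y ∈ l.take i} :=
      Set.ext fun y => by simp only [Set.mem_union, Set.mem_ofPred_eq, Set.mem_insert_iff]; tauto
    rw [IsStrictChain, ih]
    exact Iff.trans (by simp [hset]) Nat.forall_lt_succ_left'.symm

theorem IsStrictChain.sublist {c : Set α → Set α} (hc : Monotone c) {S S' : Set α}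
    {l l' : List α} (h : IsStrictChain c S l) (hl : l'.Sublist l) (hS : S' ⊆ S) :
    IsStrictChain c S' l' := by
  induction hl generalizing S S' with
  | slnil => trivial
  | cons x _ ih => exact ih h.2 (hS.trans (Set.subset_insert x S))
  | cons_cons x _ ih => exact ⟨fun hx => h.1 (hc hS hx), ih h.2 (Set.insert_subset_insert hS)⟩

end StrictChain

section Brandt

variable {n : ℕ}

theorem gen_isSub (X : Set (B n)) : IsSub (gen X) :=
  fun _ hx _ hy _ hT => hT.1 _ (hx _ hT) _ (hy _ hT)

theorem subset_gen (X : Set (B n)) : X ⊆ gen X :=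
  fun _ hx _ hT => hT.2 hx

theorem gen_subset {X T : Set (B n)} (hT : IsSub T) (hX : X ⊆ T) : gen X ⊆ T :=
  fun _ hx => hx T ⟨hT, hX⟩

theorem gen_mono : Monotone (gen : Set (B n) → Set (B n)) :=
  fun _ Y hXY => gen_subset (gen_isSub Y) (hXY.trans (subset_gen Y))

theorem gen_empty : gen (∅ : Set (B n)) = ∅ :=
  Set.subset_empty_iff.mp (gen_subset (fun _ hx => hx.elim) le_rfl)

theorem bmul_none_right (a : B n) : bmul a none = none := by
  rcases a with _ | ⟨i, j⟩ <;> rfl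

def idempotents (n : ℕ) : Set (B n) := {none} ∪ {x | ∃ i : Fin n, x = some (i, i)}

theorem bmul_idempotent_left {e : B n} (he : e ∈ idempotents n) (a : B n) :
    bmul e a = a ∨ bmul e a = none := by
  rcases he with rfl | ⟨i, rfl⟩
  · exact Or.inr rfl
  · rcases a with _ | ⟨j, k⟩
    · exact Or.inr rfl
    · by_cases h : i = j <;> simp [bmul, h]

theorem bmul_idempotent_right (a : B n) {e : B n} (he : e ∈ idempotents n) :
    bmul a e = a ∨ bmul a e = none := by
  rcases he with rfl | ⟨i, rfl⟩
  · exact Or.inr (bmul_none_right a)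
  · rcases a with _ | ⟨j, k⟩
    · exact Or.inr rfl
    · by_cases h : k = i <;> simp [bmul, h]

theorem gen_insert_idempotent_subset {e : B n} (he : e ∈ idempotents n) (S : Set (B n)) :
    gen (insert e S) ⊆ insert e (insert none (gen S)) := by
  refine gen_subset ?_ (Set.insert_subset_insert ((subset_gen S).trans (Set.subset_insert _ _)))
  rintro x hx y hy
  rcases hx with rfl | rfl | hx
  · rcases bmul_idempotent_left he y with h | h <;> rw [h]
    · exact hy
    · exact Or.inr (Or.inl rfl)
  · exact Or.inr (Or.inl rfl)
  rcases hy with rfl | rfl | hy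
  · rcases bmul_idempotent_right x he with h | h <;> rw [h]
    · exact Or.inr (Or.inr hx)
    · exact Or.inr (Or.inl rfl)
  · exact Or.inr (Or.inl (bmul_none_right x))
  · exact Or.inr (Or.inr (gen_isSub S x hx y hy))

theorem isFace_iff_exists_isStrictChain {X : Set (B n)} :
    IsFace X ↔ ∃ l : List (B n), l.Nodup ∧ {x | x ∈ l} = X ∧ IsStrictChain gen ∅ l := by
  simp only [IsFace, isStrictChain_iff_forall_getElem, Set.empty_union, List.get_eq_getElem]

theorem IsFace.subset {X Y : Set (B n)} (hX : IsFace X) (hYX : Y ⊆ X) : IsFace Y := by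
  classical
  obtain ⟨l, hnd, rfl, hl⟩ := isFace_iff_exists_isStrictChain.mp hX
  refine isFace_iff_exists_isStrictChain.mpr
    ⟨l.filter (· ∈ Y), hnd.filter _, ?_, hl.sublist gen_mono List.filter_sublist le_rfl⟩
  ext x
  simpa using fun hx => hYX hx

theorem IsFace.insert_idempotent {Y : Set (B n)} (hY : IsFace Y) {e : B n}
    (he : e ∈ idempotents n) (heY : e ∉ Y) (h0Y : none ∉ Y) : IsFace (insert e Y) := by
  obtain ⟨l, hnd, rfl, hl⟩ := isFace_iff_exists_isStrictChain.mp hY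
  refine isFace_iff_exists_isStrictChain.mpr ⟨e :: l, List.nodup_cons.mpr ⟨heY, hnd⟩, ?_, ?_⟩
  · ext x; simp
  refine ⟨by simp [gen_empty], isStrictChain_iff_forall_getElem.mpr fun i hi hmem => ?_⟩
  have hx := isStrictChain_iff_forall_getElem.mp hl i hi
  rw [Set.empty_union] at hx
  rw [Set.insert_union, Set.empty_union] at hmem
  rcases gen_insert_idempotent_subset he _ hmem with h | h | h
  · exact heY (h ▸ List.getElem_mem hi)
  · exact h0Y (h ▸ List.getElem_mem hi)
  · exact hx h

theorem IsFace.union_idempotents {Y F : Set (B n)} (hY : IsFace Y)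
    (hYE : Disjoint Y (idempotents n)) (hF : F ⊆ idempotents n) : IsFace (Y ∪ F) := by
  have h0Y : none ∉ Y := fun h => Set.disjoint_left.mp hYE h (Or.inl rfl)
  -- `none` must come first in the enumeration, so it is added last.
  have hdiag : IsFace (Y ∪ (F \ {none})) := by
    refine Set.Finite.induction_on_subset (motive := fun t _ => IsFace (Y ∪ t)) _
      (Set.toFinite _) (by simpa using hY) ?_
    intro e t he ht het hYt
    rw [Set.union_insert]
    refine hYt.insert_idempotent (hF he.1) ?_ ?_
    · rintro (h | h)
      · exact Set.disjoint_left.mp hYE h (hF he.1)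
      · exact het h
    · rintro (h | h)
      · exact h0Y h
      · exact (ht h).2 rfl
  by_cases h0F : none ∈ F
  · rw [← Set.insert_eq_of_mem h0F, ← Set.insert_sdiff_singleton, Set.union_insert]
    exact hdiag.insert_idempotent (Or.inl rfl) (by simp [h0Y]) (by simp [h0Y])
  · rwa [Set.sdiff_singleton_eq_self h0F] at hdiag

end Brandt

/-- For `X ⊆ B(n)` and `E` the set of idempotents of `B(n)`, `X` is a face of the
subsemigroup complex `H(B(n))` iff `X \ E` is a face. -/
theorem stmt13 (n : ℕ) (X : Set (B n)) :
    IsFace X ↔ IsFace (X \ ({none} ∪ {x | ∃ i : Fin n, x = some (i, i)})) := by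
  change IsFace X ↔ IsFace (X \ idempotents n)
  refine ⟨fun hX => hX.subset Set.sdiff_subset, fun hX => ?_⟩
  simpa only [Set.sdiff_union_inter] using
    hX.union_idempotents Set.disjoint_sdiff_left (Set.inter_subset_right (s := X))
end
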